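/- For every α ∈ K, one has ‖α‖ ≥ ‖α‖_E; that is, the norm ‖α‖ = √(Σ_{j=1}^{p−1} Tr(αω^j)²) is always greater than or equal to the Euclidean norm of the coordinate vector of α. -/

import Mathlib

/-!
Since `Tr(ω^k) = p·[p ∣ k] − 1`, writing `s = Σ aᵢ` gives `Tr(α ω^j) = p·a_{p−j} − s`, so
`‖α‖² = Σ (p aᵢ − s)² = ‖α‖_E² + (p + 1)((p − 1) Σ aᵢ² − s²)`, and the last term is
nonnegative by Cauchy–Schwarz.
-/

/-- The cyclotomic norm: `‖α‖ = √(Σ_{j=1}^{p−1} Tr(α·ω^j)²)`. -/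
noncomputable def cycNorm (p : ℕ) {K : Type*} [Field K] [Algebra ℚ K] (ω : K) (α : K) : ℝ :=
  Real.sqrt (∑ j ∈ Finset.Icc 1 (p - 1), ((Algebra.trace ℚ K (α * ω ^ j) : ℚ) : ℝ) ^ 2)

open Finset Polynomial

theorem Polynomial.nextCoeff_cyclotomic_prime (p : ℕ) [hp : Fact p.Prime] :
    (cyclotomic p ℚ).nextCoeff = 1 := by
  have hdeg : (cyclotomic p ℚ).natDegree = p - 1 := by
    rw [natDegree_cyclotomic, Nat.totient_prime hp.out]
  have h2 := hp.out.two_le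
  rw [nextCoeff_of_natDegree_pos (by omega), hdeg, cyclotomic_prime]
  simp only [finsetSum_coeff, coeff_X_pow, sum_ite_eq, mem_range]
  exact if_pos (by omega)

section Trace

variable {p : ℕ} [hp : Fact p.Prime] {K : Type*} [Field K] [Algebra ℚ K]
  [IsCyclotomicExtension {p} ℚ K] {ζ : K}

theorem IsPrimitiveRoot.trace_eq_neg_one (hζ : IsPrimitiveRoot ζ p) :
    Algebra.trace ℚ K ζ = -1 := by
  have : CharZero K := charZero_of_injective_algebraMap (algebraMap ℚ K).injective
  have htr := (hζ.powerBasis ℚ).trace_gen_eq_nextCoeff_minpoly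
  have hmin : minpoly ℚ ζ = cyclotomic p ℚ := by
    convert (cyclotomic_eq_minpoly_rat hζ hp.out.pos).symm using 2; exact Subsingleton.elim _ _
  rwa [IsPrimitiveRoot.powerBasis_gen, hmin, nextCoeff_cyclotomic_prime] at htr

variable (p K) in
theorem IsCyclotomicExtension.trace_one_of_prime :
    Algebra.trace ℚ K 1 = p - 1 := by
  rw [← map_one (algebraMap ℚ K), Algebra.trace_algebraMap,
    IsCyclotomicExtension.finrank K (cyclotomic.irreducible_rat hp.out.pos),
    Nat.totient_prime hp.out, nsmul_one, Nat.cast_pred hp.out.pos]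

theorem IsPrimitiveRoot.trace_pow (hζ : IsPrimitiveRoot ζ p) (k : ℕ) :
    Algebra.trace ℚ K (ζ ^ k) = (if p ∣ k then (p : ℚ) else 0) - 1 := by
  split_ifs with hk
  · rw [(hζ.pow_eq_one_iff_dvd k).2 hk, IsCyclotomicExtension.trace_one_of_prime p K]
  · rw [zero_sub]
    exact (hζ.pow_of_coprime k (hp.out.coprime_iff_not_dvd.2 hk).symm).trace_eq_neg_one

theorem IsPrimitiveRoot.trace_sum_smul_pow_mul_pow (hζ : IsPrimitiveRoot ζ p) (a : ℕ → ℚ)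
    {j : ℕ} (hj : j ∈ Icc 1 (p - 1)) :
    Algebra.trace ℚ K ((∑ i ∈ Icc 1 (p - 1), a i • ζ ^ i) * ζ ^ j) =
      p * a (p - j) - ∑ i ∈ Icc 1 (p - 1), a i := by
  rw [mem_Icc] at hj
  have hdvd : ∀ i ∈ Icc 1 (p - 1), p ∣ i + j ↔ i = p - j := fun i hi => by
    rw [mem_Icc] at hi
    refine ⟨fun h => ?_, fun h => ⟨1, by omega⟩⟩
    have := Nat.eq_of_dvd_of_lt_two_mul (by omega) h (by omega)
    omega
  calc _ = ∑ i ∈ Icc 1 (p - 1), a i * Algebra.trace ℚ K (ζ ^ (i + j)) := by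
        simp only [sum_mul, smul_mul_assoc, ← pow_add, map_sum, map_smul, smul_eq_mul]
    _ = ∑ i ∈ Icc 1 (p - 1), ((if i = p - j then p * a i else 0) - a i) :=
        sum_congr rfl fun i hi => by
          rw [hζ.trace_pow, if_congr (hdvd i hi) rfl rfl]
          split_ifs <;> ring
    _ = _ := by rw [sum_sub_distrib, sum_ite_eq', if_pos (mem_Icc.2 (by omega))]

end Trace

theorem Finset.sum_sq_le_sum_sq_card_add_one_mul_sub_sum {ι R : Type*} [CommRing R]
    [LinearOrder R] [IsStrictOrderedRing R] (s : Finset ι) (f : ι → R) :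
    ∑ i ∈ s, f i ^ 2 ≤ ∑ i ∈ s, ((#s + 1) * f i - ∑ j ∈ s, f j) ^ 2 := by
  have hexpand : ∑ i ∈ s, ((#s + 1) * f i - ∑ j ∈ s, f j) ^ 2 - ∑ i ∈ s, f i ^ 2 =
      (#s + 2) * (#s * ∑ i ∈ s, f i ^ 2 - (∑ i ∈ s, f i) ^ 2) := by
    simp only [sub_sq, mul_pow, sum_add_distrib, sum_sub_distrib, ← mul_sum, ← sum_mul,
      sum_const, nsmul_eq_mul]
    ring
  rw [← sub_nonneg, hexpand]
  exact mul_nonneg (by positivity) (sub_nonneg.2 (sq_sum_le_card_mul_sum_sq ..))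

theorem Finset.sum_Icc_one_sub_reflect {M : Type*} [AddCommMonoid M] (f : ℕ → M) (n : ℕ) :
    ∑ j ∈ Icc 1 (n - 1), f (n - j) = ∑ j ∈ Icc 1 (n - 1), f j :=
  sum_nbij' (n - ·) (n - ·) (by simp; omega) (by simp; omega) (by simp; omega) (by simp; omega)
    fun _ _ => rfl

theorem stmt8_general (p : ℕ+) (hp : (p : ℕ).Prime)
    (K : Type*) [Field K] [Algebra ℚ K] [IsCyclotomicExtension {(p : ℕ)} ℚ K]
    (ω : K) (hω : IsPrimitiveRoot ω p) (a : ℕ → ℚ) (α : K)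
    (hα : α = ∑ i ∈ Finset.Icc 1 ((p : ℕ) - 1), a i • ω ^ i) :
    Real.sqrt (∑ i ∈ Finset.Icc 1 ((p : ℕ) - 1), ((a i : ℝ)) ^ 2) ≤ cycNorm p ω α := by
  have : Fact (p : ℕ).Prime := ⟨hp⟩
  have hcard : (#(Icc 1 ((p : ℕ) - 1)) : ℚ) + 1 = p := by
    rw [Nat.card_Icc, Nat.add_sub_cancel, Nat.cast_pred p.pos, sub_add_cancel]
  have htrace : ∑ j ∈ Icc 1 ((p : ℕ) - 1), Algebra.trace ℚ K (α * ω ^ j) ^ 2 =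
      ∑ i ∈ Icc 1 ((p : ℕ) - 1), (p * a i - ∑ i ∈ Icc 1 ((p : ℕ) - 1), a i) ^ 2 := by
    conv_rhs => rw [← sum_Icc_one_sub_reflect]
    exact sum_congr rfl fun j hj => by rw [hα, hω.trace_sum_smul_pow_mul_pow a hj]
  have key := sum_sq_le_sum_sq_card_add_one_mul_sub_sum (Icc 1 ((p : ℕ) - 1)) a
  rw [hcard, ← htrace] at key
  exact Real.sqrt_le_sqrt (by exact_mod_cast key)

/-- The cyclotomic norm of `α` is at least the Euclidean norm of the coordinate vector
of `α` in the basis `ω, …, ω^{p−1}`. -/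
theorem stmt8 (p : ℕ+) (hp : (p : ℕ).Prime) (hodd : Odd (p : ℕ))
    (K : Type*) [Field K] [Algebra ℚ K] [IsCyclotomicExtension {(p : ℕ)} ℚ K]
    (ω : K) (hω : IsPrimitiveRoot ω p) (a : ℕ → ℚ) (α : K)
    (hα : α = ∑ i ∈ Finset.Icc 1 ((p : ℕ) - 1), a i • ω ^ i) :
    Real.sqrt (∑ i ∈ Finset.Icc 1 ((p : ℕ) - 1), ((a i : ℝ)) ^ 2) ≤ cycNorm p ω α :=
  stmt8_general p hp K ω hω a α hα
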